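/- Let β₁' > 0, β₂', β₀' ∈ ℝ, ρ ∈ ℝ, D > 0, and t_R: [0, D) → ℝ continuous. Define G(f) = ∫₀^f t_R(u) du + (1/β₁')[f(ln f − 1 + β₂'ρ − β₀') + (D − f)(ln(D − f) − 1)] for f ∈ (0, D). Then any stationary point f* of G satisfies f*/(D − f*) = exp(β₀' − β₁' t_R(f*) − β₂' ρ), i.e., the binary-logit ride-sourcing share condition. -/

import Mathlib

open Real Set intervalIntegral

/-! The integral term differentiates to `t_R(f)` by the fundamental theorem of calculus, and the
entropy-like term differentiates to `(ln f + β₂'ρ − β₀' − ln (D − f)) / β₁'`. Setting the sum to zero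
gives `ln (f / (D − f)) = β₀' − β₁' t_R(f) − β₂' ρ`. -/

theorem hasDerivAt_integral_of_continuousOn {g : ℝ → ℝ} {s : Set ℝ} {a x : ℝ}
    (hg : ContinuousOn g s) (hs : s ∈ nhds x) (hax : uIcc a x ⊆ s) :
    HasDerivAt (fun y => ∫ t in a..y, g t) (g x) x :=
  integral_hasDerivAt_right ((hg.mono hax).intervalIntegrable)
    ((hg.mono interior_subset).stronglyMeasurableAtFilter isOpen_interior x
      (mem_interior_iff_mem_nhds.2 hs))
    (hg.continuousAt hs)

theorem hasDerivAt_mul_log_sub_one_add {x : ℝ} (hx : x ≠ 0) (c : ℝ) :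
    HasDerivAt (fun y => y * (log y - 1 + c)) (log x + c) x := by
  have hfun : (fun y => y * (log y - 1 + c)) = fun y => y * log y + (c - 1) * y := by
    funext y
    ring
  rw [hfun]
  exact ((hasDerivAt_mul_log hx).fun_add ((hasDerivAt_id' x).const_mul (c - 1))).congr_deriv
    (by ring)

/-- `β₁'` times the non-integral part of the riders' objective, with `c = β₂'ρ − β₀'`. -/
noncomputable def logitPotential (D c f : ℝ) : ℝ :=
  f * (log f - 1 + c) + (D - f) * (log (D - f) - 1)

theorem hasDerivAt_logitPotential {D c f : ℝ} (hf : f ≠ 0) (hDf : D - f ≠ 0) :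
    HasDerivAt (logitPotential D c) (log f + c - log (D - f)) f := by
  have hdrive : HasDerivAt (fun y => (D - y) * (log (D - y) - 1)) (-log (D - f)) f := by
    have h := (hasDerivAt_mul_log_sub_one_add hDf 0).comp f ((hasDerivAt_id' f).const_sub D)
    simpa only [Function.comp_def, add_zero, mul_neg, mul_one] using h
  rw [sub_eq_add_neg]
  exact (hasDerivAt_mul_log_sub_one_add hf c).fun_add hdrive

theorem rider_cda_stationary_binary_logit_general
    (β₁' β₂' β₀' ρ D : ℝ) (hβ₁ : 0 < β₁')
    (tR : ℝ → ℝ) (htR : ContinuousOn tR (Ico 0 D))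
    (G : ℝ → ℝ)
    (hG : ∀ f ∈ Ioo 0 D, G f = (∫ u in (0:ℝ)..f, tR u) +
      (1 / β₁') * (f * (Real.log f - 1 + β₂' * ρ - β₀')
        + (D - f) * (Real.log (D - f) - 1)))
    (fstar : ℝ) (hfstar : fstar ∈ Ioo 0 D)
    (hstat : HasDerivAt G 0 fstar) :
    fstar / (D - fstar) = Real.exp (β₀' - β₁' * tR fstar - β₂' * ρ) := by
  obtain ⟨hf0, hfD⟩ := hfstar
  have hDf : 0 < D - fstar := sub_pos.2 hfD
  have hsub : uIcc 0 fstar ⊆ Ico 0 D := by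
    rw [uIcc_of_le hf0.le]
    exact Icc_subset_Ico_right hfD
  have hderiv : HasDerivAt G (tR fstar +
      1 / β₁' * (log fstar + (β₂' * ρ - β₀') - log (D - fstar))) fstar := by
    refine ((hasDerivAt_integral_of_continuousOn htR (Ico_mem_nhds hf0 hfD) hsub).fun_add
      ((hasDerivAt_logitPotential hf0.ne' hDf.ne').const_mul _)).congr_of_eventuallyEq ?_
    filter_upwards [Ioo_mem_nhds hf0 hfD] with f hf
    rw [hG f hf, logitPotential]
    ring
  have hfoc := hderiv.unique hstat
  have hlog : log fstar - log (D - fstar) = β₀' - β₁' * tR fstar - β₂' * ρ := by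
    field_simp at hfoc
    linarith
  rw [← hlog, exp_sub, exp_log hf0, exp_log hDf]

/-- Stationary points of the riders' CDA objective
`G(f) = ∫₀^f t_R(u) du + (1/β₁')[f(ln f − 1 + β₂'ρ − β₀') + (D − f)(ln(D − f) − 1)]`
on `(0, D)` satisfy the binary-logit share condition
`f*/(D − f*) = exp(β₀' − β₁' t_R(f*) − β₂' ρ)`. -/
theorem rider_cda_stationary_binary_logit
    (β₁' β₂' β₀' ρ D : ℝ) (hβ₁ : 0 < β₁') (hD : 0 < D)
    (tR : ℝ → ℝ) (htR : ContinuousOn tR (Ico 0 D))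
    (G : ℝ → ℝ)
    (hG : ∀ f ∈ Ioo 0 D, G f = (∫ u in (0:ℝ)..f, tR u) +
      (1 / β₁') * (f * (Real.log f - 1 + β₂' * ρ - β₀')
        + (D - f) * (Real.log (D - f) - 1)))
    (fstar : ℝ) (hfstar : fstar ∈ Ioo 0 D)
    (hstat : HasDerivAt G 0 fstar) :
    fstar / (D - fstar) = Real.exp (β₀' - β₁' * tR fstar - β₂' * ρ) :=
  rider_cda_stationary_binary_logit_general β₁' β₂' β₀' ρ D hβ₁ tR htR G hG fstar hfstar hstat
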